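/- Let F be a 2-CNF formula with m clauses containing no semicomplete subset (F = F^S), and let k ≥ 0 be an integer. If F has more than 3k − 2 significant variables, then sat(F) ≥ (3m + k)/4. -/
import Mathlib


open scoped Classical

/-- A clause is a proper 2-clause if it has exactly 2 literals on 2 distinct variables
(a literal is a variable together with a polarity, `true` = positive). -/
def ProperClause2 {n : ℕ} (C : Finset (Fin n × Bool)) : Prop :=
  C.card = 2 ∧ (C.image Prod.fst).card = 2

/-- A truth assignment satisfies a clause if some literal evaluates to true under it. -/
def Sat {n : ℕ} (τ : Fin n → Bool) (C : Finset (Fin n × Bool)) : Prop :=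
  ∃ p ∈ C, τ p.1 = p.2

/-- `maxSat F` is the maximum number of clauses of `F` simultaneously satisfiable. -/
noncomputable def maxSat {n : ℕ} (F : Multiset (Finset (Fin n × Bool))) : ℕ :=
  Finset.univ.sup fun τ : Fin n → Bool => F.countP (Sat τ)

/-- A sub-multiset of clauses is semicomplete if it consists of `4 = 2²` distinct
clauses every pair of which has a conflict. -/
def Semicomplete2 {n : ℕ} (G : Multiset (Finset (Fin n × Bool))) : Prop :=
  G.card = 4 ∧ G.Nodup ∧ ∀ C ∈ G, ∀ D ∈ G, C ≠ D → ∃ p ∈ C, (p.1, !p.2) ∈ D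

/-- A variable `x` is insignificant if for each literal `y` the clauses `xy` and `x̄y`
occur the same number of times in `F`; it is significant otherwise. -/
def Insignificant {n : ℕ} (F : Multiset (Finset (Fin n × Bool))) (x : Fin n) : Prop :=
  ∀ (j : Fin n) (b : Bool), j ≠ x →
    F.count {(x, true), (j, b)} = F.count {(x, false), (j, b)}

private lemma pm_mul {a b : ℤ} (ha : a = 1 ∨ a = -1) (hb : b = 1 ∨ b = -1) :
    a * b = 1 ∨ a * b = -1 := by rcases ha with h | h <;> rcases hb with h' | h' <;>
  simp [h, h']

private lemma pm_abs {a : ℤ} (ha : a = 1 ∨ a = -1) : |a| = 1 := by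
  rcases ha with h | h <;> simp [h]

lemma quad_bound {V : Type*} [Fintype V] [DecidableEq V] (e : V → V → ℤ)
    (hsymm : ∀ x y, e x y = e y x) (hdiag : ∀ x, e x x = 0) :
    ∀ (N : ℕ) (s : Finset V), s.card ≤ N →
      ∃ ξ : V → ℤ, (∀ x, ξ x = 1 ∨ ξ x = -1) ∧
        ∀ B : Finset V, (∀ x ∈ B, x ∈ s ∧ ∃ y ∈ s, e x y ≠ 0) →
        2 * (B.card : ℤ) ≤
          -3 * ∑ x ∈ s, ∑ y ∈ s, e x y * (ξ x * ξ y) := by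
  intro N
  induction N with
  | zero =>
    intro s hcard
    have : s = ∅ := Finset.card_eq_zero.mp (Nat.le_zero.mp hcard)
    subst this
    refine ⟨fun _ => 1, fun _ => Or.inl rfl, ?_⟩
    intro B hB
    have hBe : B = ∅ := Finset.eq_empty_of_forall_notMem
      (fun x hx => absurd (hB x hx).1 (Finset.notMem_empty x))
    subst hBe
    simp
  | succ N ih =>
    intro s hcard
    by_cases hE : ∃ u ∈ s, ∃ v ∈ s, e u v ≠ 0
    · obtain ⟨u, hu, v, hv, huv⟩ := hE
      have hune : u ≠ v := by rintro rfl; exact huv (hdiag u)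
      set s' : Finset V := (s.erase u).erase v with hs'
      have hvs : v ∈ s.erase u := Finset.mem_erase.mpr ⟨Ne.symm hune, hv⟩
      have hcard' : s'.card ≤ N := by
        have h1 : (s.erase u).card = s.card - 1 := Finset.card_erase_of_mem hu
        have h2 : s'.card = (s.erase u).card - 1 := Finset.card_erase_of_mem hvs
        have h3 : 2 ≤ s.card := by
          have := Finset.one_lt_card.mpr ⟨u, hu, v, hv, hune⟩
          omega
        omega
      obtain ⟨ξ', hξ'pm, hξ'all⟩ := ih s' hcard'
      set Bs' : Finset V := s'.filter (fun x => ∃ y ∈ s', e x y ≠ 0) with hBs'def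
      have hξ' : 2 * (Bs'.card : ℤ) ≤ -3 * ∑ x ∈ s', ∑ y ∈ s', e x y * (ξ' x * ξ' y) :=
        hξ'all Bs' (fun x hx => ⟨(Finset.mem_filter.mp hx).1, (Finset.mem_filter.mp hx).2⟩)
      have hus' : u ∉ s' := by
        intro h
        exact Finset.notMem_erase u s (Finset.mem_of_mem_erase h)
      have hvs' : v ∉ s' := Finset.notMem_erase v _
      set I : Finset V :=
        s'.filter (fun y => (e u y ≠ 0 ∨ e v y ≠ 0) ∧ ∀ z ∈ s', e y z = 0) with hIdef
      have hIs' : I ⊆ s' := Finset.filter_subset _ _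
      -- choose σ
      obtain ⟨σ, hσpm, hσ⟩ : ∃ σ : ℤ, (σ = 1 ∨ σ = -1) ∧
          2 * (I.card : ℤ) + 4 ≤
            -6 * (e u v * σ) + 6 * ∑ y ∈ I, |e u y + σ * e v y| := by
        by_cases hIe : I = ∅
        · refine ⟨if 0 ≤ e u v then -1 else 1, by split <;> simp, ?_⟩
          have habs : e u v * (if 0 ≤ e u v then (-1:ℤ) else 1) = -|e u v| := by
            split_ifs with h
            · rw [abs_of_nonneg h]; ring
            · rw [abs_of_neg (lt_of_not_ge h)]; ring
          rw [hIe]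
          simp only [Finset.card_empty, Finset.sum_empty, Nat.cast_zero, habs]
          have : 1 ≤ |e u v| := Int.one_le_abs huv
          linarith
        · have hIne : I.Nonempty := Finset.nonempty_iff_ne_empty.mpr hIe
          have hcard1 : 1 ≤ (I.card : ℤ) := by
            exact_mod_cast Finset.card_pos.mpr hIne
          have key : ∀ y ∈ I, 2 ≤ |e u y + 1 * e v y| + |e u y + (-1) * e v y| := by
            intro y hy
            obtain ⟨h1, -⟩ := (Finset.mem_filter.mp hy).2
            rcases h1 with h | h
            · have h2 : 1 ≤ |e u y| := Int.one_le_abs h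
              have h3 : 2 * |e u y| = |(e u y + 1 * e v y) + (e u y + (-1) * e v y)| := by
                have : (e u y + 1 * e v y) + (e u y + (-1) * e v y) = 2 * e u y := by ring
                rw [this, abs_mul]
                norm_num
              have h4 := abs_add_le (e u y + 1 * e v y) (e u y + (-1) * e v y)
              linarith
            · have h2 : 1 ≤ |e v y| := Int.one_le_abs h
              have h3 : 2 * |e v y| = |(e u y + 1 * e v y) - (e u y + (-1) * e v y)| := by
                have : (e u y + 1 * e v y) - (e u y + (-1) * e v y) = 2 * e v y := by ring
                rw [this, abs_mul]
                norm_num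
              have h4 := abs_sub (e u y + 1 * e v y) (e u y + (-1) * e v y)
              linarith
          have hsum : 2 * (I.card : ℤ) ≤
              ∑ y ∈ I, |e u y + 1 * e v y| + ∑ y ∈ I, |e u y + (-1) * e v y| := by
            rw [← Finset.sum_add_distrib]
            calc 2 * (I.card : ℤ) = ∑ _y ∈ I, (2:ℤ) := by
                  rw [Finset.sum_const, nsmul_eq_mul]; ring
            _ ≤ _ := Finset.sum_le_sum key
          rcases le_or_gt (2 * (I.card : ℤ) + 4)
              (-6 * (e u v * 1) + 6 * ∑ y ∈ I, |e u y + 1 * e v y|) with h | h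
          · exact ⟨1, Or.inl rfl, h⟩
          · refine ⟨-1, Or.inr rfl, ?_⟩
            nlinarith [hsum, hcard1]
      -- choose su
      set Aσ : ℤ := ∑ y ∈ s' \ I, (e u y + σ * e v y) * ξ' y with hAdef
      set su : ℤ := if 0 ≤ Aσ then -1 else 1 with hsudef
      have hsupm : su = 1 ∨ su = -1 := by rw [hsudef]; split <;> simp
      have hsuA : su * Aσ = -|Aσ| := by
        rw [hsudef]
        split_ifs with h
        · rw [abs_of_nonneg h]; ring
        · rw [abs_of_neg (lt_of_not_ge h)]; ring
      have hsu2 : su * su = 1 := by rcases hsupm with h | h <;> simp [h]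
      have hsuabs : |su| = 1 := pm_abs hsupm
      -- define ξ
      set ξ : V → ℤ := fun z => if z = u then su else if z = v then σ * su
        else if z ∈ I then (if 0 ≤ (e u z + σ * e v z) * su then -1 else 1)
        else ξ' z with hξdef
      have hξpm : ∀ x, ξ x = 1 ∨ ξ x = -1 := by
        intro x
        rw [hξdef]
        dsimp only
        split_ifs
        · exact hsupm
        · exact pm_mul hσpm hsupm
        · exact Or.inr rfl
        · exact Or.inl rfl
        · exact hξ'pm x
      have hξu : ξ u = su := by rw [hξdef]; simp
      have hξv : ξ v = σ * su := by rw [hξdef]; simp [Ne.symm hune]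
      have hξs' : ∀ z ∈ s', z ∉ I → ξ z = ξ' z := by
        intro z hz hzI
        have hzu : z ≠ u := by rintro rfl; exact hus' hz
        have hzv : z ≠ v := by rintro rfl; exact hvs' hz
        rw [hξdef]; simp [hzu, hzv, hzI]
      have hξI : ∀ z ∈ I, (e u z + σ * e v z) * su * ξ z = -|e u z + σ * e v z| := by
        intro z hz
        have hzs' : z ∈ s' := hIs' hz
        have hzu : z ≠ u := by rintro rfl; exact hus' hzs'
        have hzv : z ≠ v := by rintro rfl; exact hvs' hzs'
        have hξz : ξ z = (if 0 ≤ (e u z + σ * e v z) * su then (-1:ℤ) else 1) := by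
          rw [hξdef]; simp [hzu, hzv, hz]
        have habs : |(e u z + σ * e v z) * su| = |e u z + σ * e v z| := by
          rw [abs_mul, hsuabs, mul_one]
        rw [hξz]
        split_ifs with h
        · rw [← habs, abs_of_nonneg h]; ring
        · rw [← habs, abs_of_neg (lt_of_not_ge h)]; ring
      -- expansion of the double sum
      have hs_eq : s = insert u (insert v s') := by
        rw [hs', Finset.insert_erase hvs, Finset.insert_erase hu]
      have hu_not : u ∉ insert v s' := by
        simp only [Finset.mem_insert]
        rintro (h | h)
        · exact hune h
        · exact hus' h
      have expand : ∀ g : V → V → ℤ, ∑ x ∈ s, ∑ y ∈ s, g x y =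
          g u u + g u v + g v u + g v v + ∑ y ∈ s', g u y + ∑ y ∈ s', g v y
            + ∑ x ∈ s', g x u + ∑ x ∈ s', g x v + ∑ x ∈ s', ∑ y ∈ s', g x y := by
        intro g
        rw [hs_eq]
        rw [Finset.sum_insert hu_not, Finset.sum_insert hvs']
        simp only [Finset.sum_insert hu_not, Finset.sum_insert hvs',
          Finset.sum_add_distrib]
        ring
      have hScore : ∑ x ∈ s', ∑ y ∈ s', e x y * (ξ x * ξ y)
          = ∑ x ∈ s', ∑ y ∈ s', e x y * (ξ' x * ξ' y) := by
        refine Finset.sum_congr rfl fun x hx => Finset.sum_congr rfl fun y hy => ?_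
        by_cases hexy : e x y = 0
        · rw [hexy]; ring
        · have hxI : x ∉ I := by
            intro hxI
            exact hexy ((Finset.mem_filter.mp hxI).2.2 y hy)
          have hyI : y ∉ I := by
            intro hyI
            have h0 : e y x = 0 := (Finset.mem_filter.mp hyI).2.2 x hx
            exact hexy (by rw [hsymm]; exact h0)
          rw [hξs' x hx hxI, hξs' y hy hyI]
      have hrowsum : ∑ y ∈ s', e u y * (ξ u * ξ y) + ∑ y ∈ s', e v y * (ξ v * ξ y)
          = su * Aσ + (- ∑ y ∈ I, |e u y + σ * e v y|) := by
        rw [← Finset.sum_add_distrib]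
        have h1 : ∀ y ∈ s', e u y * (ξ u * ξ y) + e v y * (ξ v * ξ y)
            = (e u y + σ * e v y) * su * ξ y := by
          intro y hy; rw [hξu, hξv]; ring
        rw [Finset.sum_congr rfl h1, ← Finset.sum_sdiff hIs']
        congr 1
        · rw [hAdef, Finset.mul_sum]
          refine Finset.sum_congr rfl fun y hy => ?_
          obtain ⟨hys', hyI⟩ := Finset.mem_sdiff.mp hy
          rw [hξs' y hys' hyI]; ring
        · rw [Finset.sum_congr rfl (fun y hy => hξI y hy)]
          simp
      have hSexp : ∑ x ∈ s, ∑ y ∈ s, e x y * (ξ x * ξ y)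
          = 2 * (e u v * σ) + 2 * (su * Aσ) - 2 * ∑ y ∈ I, |e u y + σ * e v y|
            + ∑ x ∈ s', ∑ y ∈ s', e x y * (ξ' x * ξ' y) := by
        rw [expand (fun x y => e x y * (ξ x * ξ y))]
        have hdu : e u u * (ξ u * ξ u) = 0 := by rw [hdiag]; ring
        have hdv : e v v * (ξ v * ξ v) = 0 := by rw [hdiag]; ring
        have hsusigma : su * (σ * su) = σ := by
          rw [show su * (σ * su) = σ * (su * su) from by ring, hsu2, mul_one]
        have huvt : e u v * (ξ u * ξ v) = e u v * σ := by rw [hξu, hξv, hsusigma]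
        have hvut : e v u * (ξ v * ξ u) = e u v * σ := by
          rw [hξu, hξv, hsymm v u,
            show σ * su * su = su * (σ * su) from by ring, hsusigma]
        have hcolu : ∑ x ∈ s', e x u * (ξ x * ξ u) = ∑ y ∈ s', e u y * (ξ u * ξ y) := by
          refine Finset.sum_congr rfl fun x hx => ?_
          rw [hsymm x u]; ring
        have hcolv : ∑ x ∈ s', e x v * (ξ x * ξ v) = ∑ y ∈ s', e v y * (ξ v * ξ y) := by
          refine Finset.sum_congr rfl fun x hx => ?_
          rw [hsymm x v]; ring
        rw [hdu, hdv, huvt, hvut, hcolu, hcolv, hScore]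
        linear_combination (2:ℤ) * hrowsum
      refine ⟨ξ, hξpm, ?_⟩
      intro B hB
      have hBsub : B ⊆ Bs' ∪ I ∪ {u, v} := by
        intro x hx
        obtain ⟨hxs, y, hys, hexy⟩ := hB x hx
        by_cases hxu : x = u
        · subst hxu; exact Finset.mem_union_right _ (by simp)
        by_cases hxv : x = v
        · subst hxv; exact Finset.mem_union_right _ (by simp)
        have hxs' : x ∈ s' := Finset.mem_erase.mpr ⟨hxv, Finset.mem_erase.mpr ⟨hxu, hxs⟩⟩
        by_cases hP : ∃ z ∈ s', e x z ≠ 0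
        · exact Finset.mem_union_left _ (Finset.mem_union_left _
            (by rw [hBs'def]; exact Finset.mem_filter.mpr ⟨hxs', hP⟩))
        · push_neg at hP
          have hxI : x ∈ I := by
            refine Finset.mem_filter.mpr ⟨hxs', ?_, hP⟩
            rw [hs_eq] at hys
            rcases Finset.mem_insert.mp hys with rfl | hys2
            · exact Or.inl (by rw [hsymm]; exact hexy)
            rcases Finset.mem_insert.mp hys2 with rfl | hys3
            · exact Or.inr (by rw [hsymm]; exact hexy)
            · exact absurd (hP y hys3) hexy
          exact Finset.mem_union_left _ (Finset.mem_union_right _ hxI)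
      have hcardB : ((B.card : ℤ))
          ≤ (Bs'.card : ℤ) + I.card + 2 := by
        have h1 := Finset.card_le_card hBsub
        have h2 := Finset.card_union_le (Bs' ∪ I) ({u, v} : Finset V)
        have h3 := Finset.card_union_le Bs' I
        have h4 : ({u, v} : Finset V).card ≤ 2 := by
          apply le_trans (Finset.card_insert_le _ _); simp
        have h5 : B.card ≤ Bs'.card + I.card + 2 := by omega
        exact_mod_cast h5
      rw [hSexp]
      have habsA : (0:ℤ) ≤ |Aσ| := abs_nonneg _
      linarith [hξ', hσ, hcardB, hsuA, habsA]
    · -- no edge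
      refine ⟨fun _ => 1, fun _ => Or.inl rfl, ?_⟩
      push_neg at hE
      intro B hB
      have hBe : B = ∅ := by
        apply Finset.eq_empty_of_forall_notMem
        intro x hx
        obtain ⟨hxs, y, hys, hexy⟩ := hB x hx
        exact hexy (hE x hxs y hys)
      have h2 : ∑ x ∈ s, ∑ y ∈ s, e x y * ((1:ℤ) * 1) = 0 := by
        apply Finset.sum_eq_zero
        intro x hx
        apply Finset.sum_eq_zero
        intro y hy
        rw [hE x hx y hy]; ring
      rw [hBe, h2]
      simp


namespace Stmt15
variable {n : ℕ}

def sg (a : Bool) : ℤ := if a then 1 else -1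

lemma sg_sq (a : Bool) : sg a * sg a = 1 := by cases a <;> simp [sg]

def lit (C : Finset (Fin n × Bool)) (x : Fin n) : ℤ :=
  ∑ p ∈ C, if p.1 = x then sg p.2 else 0

def xi (τ : Fin n → Bool) (x : Fin n) : ℤ := sg (τ x)

def cE (F : Multiset (Finset (Fin n × Bool))) (x : Fin n) : ℤ :=
  (F.map fun C => lit C x).sum

def eE (F : Multiset (Finset (Fin n × Bool))) (x y : Fin n) : ℤ :=
  if x = y then 0 else (F.map fun C => lit C x * lit C y).sum

lemma proper_repr {C : Finset (Fin n × Bool)} (hC : ProperClause2 C) :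
    ∃ p q : Fin n, ∃ a b : Bool, p ≠ q ∧ C = {(p,a),(q,b)} := by
  obtain ⟨h2, him⟩ := hC
  obtain ⟨r, t, hrt, hC⟩ := Finset.card_eq_two.mp h2
  refine ⟨r.1, t.1, r.2, t.2, ?_, by rw [hC]⟩
  intro hfst
  rw [hC] at him
  rw [Finset.image_insert, Finset.image_singleton, hfst] at him
  simp at him

lemma lit_pair {p q : Fin n} {a b : Bool} (hpq : p ≠ q) (x : Fin n) :
    lit ({(p,a),(q,b)} : Finset (Fin n × Bool)) x
      = (if p = x then sg a else 0) + (if q = x then sg b else 0) := by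
  unfold lit
  rw [Finset.sum_pair (by simp [hpq] : ((p,a) : Fin n × Bool) ≠ (q,b))]

lemma perclause (τ : Fin n → Bool) {C : Finset (Fin n × Bool)} (hC : ProperClause2 C) :
    2 * ∑ x, lit C x * xi τ x
      - ∑ x, ∑ y, (if x = y then 0 else lit C x * lit C y) * (xi τ x * xi τ y)
    = 8 * (if Sat τ C then 1 else 0) - 6 := by
  obtain ⟨p, q, a, b, hpq, rfl⟩ := proper_repr hC
  have hxisq : ∀ x, xi τ x * xi τ x = 1 := fun x => sg_sq (τ x)
  have hL : ∑ x, lit ({(p,a),(q,b)} : Finset (Fin n × Bool)) x * xi τ x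
      = sg a * xi τ p + sg b * xi τ q := by
    rw [Finset.sum_congr rfl (fun x _ => by rw [lit_pair hpq x])]
    simp only [add_mul, ite_mul, zero_mul]
    rw [Finset.sum_add_distrib, Finset.sum_ite_eq, Finset.sum_ite_eq]
    simp
  have hlitsq : ∑ x, lit ({(p,a),(q,b)} : Finset (Fin n × Bool)) x
      * lit ({(p,a),(q,b)} : Finset (Fin n × Bool)) x = 2 := by
    have h1 : ∀ x : Fin n, lit ({(p,a),(q,b)} : Finset (Fin n × Bool)) x
        * lit ({(p,a),(q,b)} : Finset (Fin n × Bool)) x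
        = (if p = x then 1 else 0) + (if q = x then 1 else 0) := by
      intro x
      rw [lit_pair hpq x]
      split_ifs with h1 h2
      · exact absurd (h1.trans h2.symm) hpq
      all_goals simp [sg_sq]
    rw [Finset.sum_congr rfl (fun x _ => h1 x), Finset.sum_add_distrib,
      Finset.sum_ite_eq, Finset.sum_ite_eq]
    simp
  have hDD : ∑ x, ∑ y, (if x = y then 0 else lit ({(p,a),(q,b)} : Finset (Fin n × Bool)) x
        * lit ({(p,a),(q,b)} : Finset (Fin n × Bool)) y) * (xi τ x * xi τ y)
      = (sg a * xi τ p + sg b * xi τ q) * (sg a * xi τ p + sg b * xi τ q) - 2 := by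
    set L := fun x => lit ({(p,a),(q,b)} : Finset (Fin n × Bool)) x with hLdef
    have h1 : ∀ x y : Fin n, (if x = y then (0:ℤ) else L x * L y) * (xi τ x * xi τ y)
        = (L x * xi τ x) * (L y * xi τ y)
          - (if x = y then (L x * xi τ x) * (L y * xi τ y) else 0) := by
      intro x y; split_ifs with h
      · subst h; ring
      · ring
    calc ∑ x, ∑ y, (if x = y then (0:ℤ) else L x * L y) * (xi τ x * xi τ y)
        = ∑ x, ∑ y, ((L x * xi τ x) * (L y * xi τ y)
            - (if x = y then (L x * xi τ x) * (L y * xi τ y) else 0)) := by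
          exact Finset.sum_congr rfl fun x _ => Finset.sum_congr rfl fun y _ => h1 x y
      _ = (∑ x, L x * xi τ x) * (∑ y, L y * xi τ y)
            - ∑ x, (L x * xi τ x) * (L x * xi τ x) := by
          simp only [Finset.sum_sub_distrib]
          rw [← Finset.sum_mul_sum]
          congr 1
          refine Finset.sum_congr rfl fun x _ => ?_
          rw [Finset.sum_ite_eq]
          simp
      _ = (sg a * xi τ p + sg b * xi τ q) * (sg a * xi τ p + sg b * xi τ q) - 2 := by
          rw [hL]
          congr 1
          rw [← hlitsq]
          refine Finset.sum_congr rfl fun x _ => ?_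
          have := hxisq x
          nlinarith [hxisq x]
  rw [hL, hDD]
  have hsat : Sat τ ({(p,a),(q,b)} : Finset (Fin n × Bool)) ↔ (τ p = a ∨ τ q = b) := by
    unfold Sat
    constructor
    · rintro ⟨r, hr, hval⟩
      rcases Finset.mem_insert.mp hr with rfl | hr2
      · exact Or.inl hval
      · rw [Finset.mem_singleton] at hr2; subst hr2; exact Or.inr hval
    · rintro (h | h)
      · exact ⟨(p,a), by simp, h⟩
      · exact ⟨(q,b), by simp, h⟩
  rw [if_congr hsat rfl rfl]
  unfold xi
  cases a <;> cases b <;> cases hp : τ p <;> cases hq : τ q <;> norm_num [sg]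

lemma identity (F : Multiset (Finset (Fin n × Bool)))
    (hF : ∀ C ∈ F, ProperClause2 C) (τ : Fin n → Bool) :
    2 * ∑ x, cE F x * xi τ x - ∑ x, ∑ y, eE F x y * (xi τ x * xi τ y)
    = 8 * (F.countP (Sat τ) : ℤ) - 6 * (F.card : ℤ) := by
  induction F using Multiset.induction_on with
  | empty => simp [cE, eE]
  | cons C F' ihF =>
    have hC := hF C (Multiset.mem_cons_self _ _)
    have hF' : ∀ D ∈ F', ProperClause2 D := fun D hD => hF D (Multiset.mem_cons_of_mem hD)
    have hce : ∀ x : Fin n, cE (C ::ₘ F') x = lit C x + cE F' x := by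
      intro x; unfold cE; rw [Multiset.map_cons, Multiset.sum_cons]
    have hee : ∀ x y : Fin n, eE (C ::ₘ F') x y
        = (if x = y then 0 else lit C x * lit C y) + eE F' x y := by
      intro x y; unfold eE
      split_ifs with h
      · ring
      · rw [Multiset.map_cons, Multiset.sum_cons]
    rw [Multiset.countP_cons, Multiset.card_cons]
    simp only [hce, hee, add_mul, Finset.sum_add_distrib]
    push_cast
    have h1 := perclause τ hC
    have h2 := ihF hF'
    linarith

lemma pair_eq_iff {p q x y : Fin n} {a b a' b' : Bool} (hpq : p ≠ q) :
    ({(p,a),(q,b)} : Finset (Fin n × Bool)) = {(x,a'),(y,b')} ↔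
      ((p,a) = (x,a') ∧ (q,b) = (y,b')) ∨ ((p,a) = (y,b') ∧ (q,b) = (x,a')) := by
  constructor
  · intro h
    have h1 : ((p,a) : Fin n × Bool) ∈ ({(x,a'),(y,b')} : Finset (Fin n × Bool)) := by
      rw [← h]; simp
    have h2 : ((q,b) : Fin n × Bool) ∈ ({(x,a'),(y,b')} : Finset (Fin n × Bool)) := by
      rw [← h]; simp
    simp only [Finset.mem_insert, Finset.mem_singleton] at h1 h2
    rcases h1 with h1 | h1 <;> rcases h2 with h2 | h2
    · exact absurd (congrArg Prod.fst (h1.trans h2.symm)) hpq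
    · exact Or.inl ⟨h1, h2⟩
    · exact Or.inr ⟨h1, h2⟩
    · exact absurd (congrArg Prod.fst (h1.trans h2.symm)) hpq
  · rintro (⟨h1, h2⟩ | ⟨h1, h2⟩) <;> rw [h1, h2]
    exact Finset.pair_comm _ _

lemma lit_sq {p q : Fin n} {a b : Bool} (hpq : p ≠ q) (y : Fin n) :
    lit ({(p,a),(q,b)} : Finset (Fin n × Bool)) y
      * lit ({(p,a),(q,b)} : Finset (Fin n × Bool)) y
      = (if p = y then 1 else 0) + (if q = y then 1 else 0) := by
  rw [lit_pair hpq y]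
  split_ifs with h1 h2
  · exact absurd (h1.trans h2.symm) hpq
  all_goals simp [sg_sq]

def pE (F : Multiset (Finset (Fin n × Bool))) (x y : Fin n) : ℤ :=
  (F.map fun C => lit C x * (lit C y * lit C y)).sum

def e2 (F : Multiset (Finset (Fin n × Bool))) (x y : Fin n) : ℤ :=
  (F.map fun C => (lit C x * lit C x) * (lit C y * lit C y)).sum

lemma ind_formula {C : Finset (Fin n × Bool)} (hC : ProperClause2 C)
    {x y : Fin n} (hxy : x ≠ y) (ta tb : Bool) :
    4 * (if ({(x,ta),(y,tb)} : Finset (Fin n × Bool)) = C then (1:ℤ) else 0)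
      = (lit C x * lit C x) * (lit C y * lit C y)
        + sg ta * (lit C x * (lit C y * lit C y))
        + sg tb * (lit C y * (lit C x * lit C x))
        + sg ta * (sg tb * (lit C x * lit C y)) := by
  obtain ⟨p, q, a, b, hpq, rfl⟩ := proper_repr hC
  by_cases hxp : p = x
  · have hqx : ¬ q = x := fun h => hpq (hxp.trans h.symm)
    by_cases hyq : q = y
    · have hpy : ¬ p = y := fun h => hxy (hxp.symm.trans h)
      subst hxp; subst hyq
      cases a <;> cases b <;> cases ta <;> cases tb <;>
        simp [pair_eq_iff hxy, lit_pair hpq, Prod.mk.injEq, hpq, hqx, hpy, sg] <;> ring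
    · have hpy : ¬ p = y := fun h => hxy (hxp.symm.trans h)
      have hly : lit ({(p,a),(q,b)} : Finset (Fin n × Bool)) y = 0 := by
        rw [lit_pair hpq y, if_neg hpy, if_neg hyq]; ring
      have hind : ¬ (({(x,ta),(y,tb)} : Finset (Fin n × Bool)) = {(p,a),(q,b)}) := by
        intro h
        have : ((y,tb) : Fin n × Bool) ∈ ({(p,a),(q,b)} : Finset (Fin n × Bool)) := by
          rw [← h]; simp
        simp only [Finset.mem_insert, Finset.mem_singleton, Prod.mk.injEq] at this
        rcases this with ⟨h', -⟩ | ⟨h', -⟩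
        · exact hpy h'.symm
        · exact hyq h'.symm
      rw [if_neg hind, hly]; ring
  · by_cases hxq : q = x
    · by_cases hyp : p = y
      · subst hxq; subst hyp
        cases a <;> cases b <;> cases ta <;> cases tb <;>
          simp [pair_eq_iff hxy, lit_pair hpq, Prod.mk.injEq, hpq, hpq.symm, hxp, sg] <;> ring
      · have hyq : ¬ q = y := fun h => hxy (hxq.symm.trans h)
        have hly : lit ({(p,a),(q,b)} : Finset (Fin n × Bool)) y = 0 := by
          rw [lit_pair hpq y, if_neg hyp, if_neg hyq]; ring
        have hind : ¬ (({(x,ta),(y,tb)} : Finset (Fin n × Bool)) = {(p,a),(q,b)}) := by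
          intro h
          have : ((y,tb) : Fin n × Bool) ∈ ({(p,a),(q,b)} : Finset (Fin n × Bool)) := by
            rw [← h]; simp
          simp only [Finset.mem_insert, Finset.mem_singleton, Prod.mk.injEq] at this
          rcases this with ⟨h', -⟩ | ⟨h', -⟩
          · exact hyp h'.symm
          · exact hyq h'.symm
        rw [if_neg hind, hly]; ring
    · have hlx : lit ({(p,a),(q,b)} : Finset (Fin n × Bool)) x = 0 := by
        rw [lit_pair hpq x, if_neg hxp, if_neg hxq]; ring
      have hind : ¬ (({(x,ta),(y,tb)} : Finset (Fin n × Bool)) = {(p,a),(q,b)}) := by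
        intro h
        have : ((x,ta) : Fin n × Bool) ∈ ({(p,a),(q,b)} : Finset (Fin n × Bool)) := by
          rw [← h]; simp
        simp only [Finset.mem_insert, Finset.mem_singleton, Prod.mk.injEq] at this
        rcases this with ⟨h', -⟩ | ⟨h', -⟩
        · exact hxp h'.symm
        · exact hxq h'.symm
      rw [if_neg hind, hlx]; ring

lemma count_formula (F : Multiset (Finset (Fin n × Bool)))
    (hF : ∀ C ∈ F, ProperClause2 C) {x y : Fin n} (hxy : x ≠ y) (ta tb : Bool) :
    4 * (F.count {(x,ta),(y,tb)} : ℤ)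
      = e2 F x y + sg ta * pE F x y + sg tb * pE F y x
        + sg ta * (sg tb * (F.map fun C => lit C x * lit C y).sum) := by
  induction F using Multiset.induction_on with
  | empty => simp [e2, pE]
  | cons C F' ihF =>
    have hC := hF C (Multiset.mem_cons_self _ _)
    have hF' : ∀ D ∈ F', ProperClause2 D := fun D hD => hF D (Multiset.mem_cons_of_mem hD)
    rw [Multiset.count_cons]
    unfold e2 pE
    simp only [Multiset.map_cons, Multiset.sum_cons]
    have h1 := ind_formula hC hxy ta tb
    have h2 := ihF hF'
    unfold e2 pE at h2
    push_cast
    push_cast at h2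
    linarith

lemma lit_sq_sum {C : Finset (Fin n × Bool)} (hC : ProperClause2 C) (x : Fin n) :
    ∑ y ∈ Finset.univ.erase x, lit C x * (lit C y * lit C y) = lit C x := by
  obtain ⟨p, q, a, b, hpq, rfl⟩ := proper_repr hC
  set D := ({(p,a),(q,b)} : Finset (Fin n × Bool)) with hD
  have hsum : ∑ y ∈ Finset.univ.erase x, lit D x * (lit D y * lit D y)
      = lit D x *
        ((if p ∈ Finset.univ.erase x then (1:ℤ) else 0)
          + (if q ∈ Finset.univ.erase x then (1:ℤ) else 0)) := by
    rw [← Finset.mul_sum]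
    congr 1
    rw [Finset.sum_congr rfl (fun y _ => lit_sq hpq y), Finset.sum_add_distrib,
      Finset.sum_ite_eq, Finset.sum_ite_eq]
  rw [hsum]
  simp only [Finset.mem_erase, Finset.mem_univ, and_true]
  by_cases hxp : p = x
  · have hqx : ¬ q = x := fun h => hpq (hxp.trans h.symm)
    rw [lit_pair hpq x, if_pos hxp, if_neg hqx, if_neg (by simp [hxp]), if_pos hqx]
    ring
  · by_cases hxq : q = x
    · rw [lit_pair hpq x, if_neg hxp, if_pos hxq, if_pos hxp, if_neg (by simp [hxq])]
      ring
    · rw [lit_pair hpq x, if_neg hxp, if_neg hxq, if_pos hxp, if_pos hxq]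
      ring

lemma eE_symm (F : Multiset (Finset (Fin n × Bool))) (x y : Fin n) :
    eE F x y = eE F y x := by
  unfold eE
  by_cases h : x = y
  · simp [h]
  · rw [if_neg h, if_neg (fun hh => h hh.symm)]
    congr 1
    apply Multiset.map_congr rfl
    intro C _
    ring

lemma eE_diag (F : Multiset (Finset (Fin n × Bool))) (x : Fin n) : eE F x x = 0 := by
  simp [eE]

lemma cE_eq_sum_pE (F : Multiset (Finset (Fin n × Bool)))
    (hF : ∀ C ∈ F, ProperClause2 C) (x : Fin n) :
    cE F x = ∑ y ∈ Finset.univ.erase x, pE F x y := by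
  induction F using Multiset.induction_on with
  | empty => simp [cE, pE]
  | cons C F' ihF =>
    have hC := hF C (Multiset.mem_cons_self _ _)
    have hF' : ∀ D ∈ F', ProperClause2 D := fun D hD => hF D (Multiset.mem_cons_of_mem hD)
    unfold cE pE
    simp only [Multiset.map_cons, Multiset.sum_cons]
    rw [Finset.sum_add_distrib, lit_sq_sum hC x]
    have h2 := ihF hF'
    unfold cE pE at h2
    linarith

lemma semicomplete_of_counts {F : Multiset (Finset (Fin n × Bool))}
    {x y z : Fin n} (hyx : y ≠ x) (hzx : z ≠ x)
    (h1 : 0 < F.count {(x,true),(y,true)}) (h2 : 0 < F.count {(x,true),(y,false)})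
    (h3 : 0 < F.count {(x,false),(z,true)}) (h4 : 0 < F.count {(x,false),(z,false)}) :
    ∃ G ≤ F, Semicomplete2 G := by
  have hne12 : ({(x,true),(y,true)} : Finset (Fin n × Bool)) ≠ {(x,true),(y,false)} := by
    intro h
    have hm : ((y,true) : Fin n × Bool) ∈ ({(x,true),(y,false)} : Finset (Fin n × Bool)) := by
      rw [← h]; simp
    simp [Prod.mk.injEq, hyx] at hm
  have hne13 : ({(x,true),(y,true)} : Finset (Fin n × Bool)) ≠ {(x,false),(z,true)} := by
    intro h
    have hm : ((x,true) : Fin n × Bool) ∈ ({(x,false),(z,true)} : Finset (Fin n × Bool)) := by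
      rw [← h]; simp
    simp [Prod.mk.injEq, Ne.symm hzx] at hm
  have hne14 : ({(x,true),(y,true)} : Finset (Fin n × Bool)) ≠ {(x,false),(z,false)} := by
    intro h
    have hm : ((x,true) : Fin n × Bool) ∈ ({(x,false),(z,false)} : Finset (Fin n × Bool)) := by
      rw [← h]; simp
    simp [Prod.mk.injEq, Ne.symm hzx] at hm
  have hne23 : ({(x,true),(y,false)} : Finset (Fin n × Bool)) ≠ {(x,false),(z,true)} := by
    intro h
    have hm : ((x,true) : Fin n × Bool) ∈ ({(x,false),(z,true)} : Finset (Fin n × Bool)) := by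
      rw [← h]; simp
    simp [Prod.mk.injEq, Ne.symm hzx] at hm
  have hne24 : ({(x,true),(y,false)} : Finset (Fin n × Bool)) ≠ {(x,false),(z,false)} := by
    intro h
    have hm : ((x,true) : Fin n × Bool) ∈ ({(x,false),(z,false)} : Finset (Fin n × Bool)) := by
      rw [← h]; simp
    simp [Prod.mk.injEq, Ne.symm hzx] at hm
  have hne34 : ({(x,false),(z,true)} : Finset (Fin n × Bool)) ≠ {(x,false),(z,false)} := by
    intro h
    have hm : ((z,true) : Fin n × Bool) ∈ ({(x,false),(z,false)} : Finset (Fin n × Bool)) := by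
      rw [← h]; simp
    simp [Prod.mk.injEq, hzx] at hm
  refine ⟨({(x,true),(y,true)} : Finset (Fin n × Bool)) ::ₘ
    ({(x,true),(y,false)} : Finset (Fin n × Bool)) ::ₘ
    ({(x,false),(z,true)} : Finset (Fin n × Bool)) ::ₘ
    {({(x,false),(z,false)} : Finset (Fin n × Bool))}, ?_, ?_, ?_, ?_⟩
  · rw [Multiset.le_iff_count]
    intro a
    by_cases ha1 : a = ({(x,true),(y,true)} : Finset (Fin n × Bool))
    · subst ha1
      have hcnt : Multiset.count ({(x,true),(y,true)} : Finset (Fin n × Bool)) (({(x,true),(y,true)} : Finset (Fin n × Bool)) ::ₘ ({(x,true),(y,false)} : Finset (Fin n × Bool)) ::ₘ ({(x,false),(z,true)} : Finset (Fin n × Bool)) ::ₘ {({(x,false),(z,false)} : Finset (Fin n × Bool))}) = 1 := by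
        simp [Multiset.count_cons, Multiset.count_singleton, hne12, hne13, hne14]
      omega
    by_cases ha2 : a = ({(x,true),(y,false)} : Finset (Fin n × Bool))
    · subst ha2
      have hcnt : Multiset.count ({(x,true),(y,false)} : Finset (Fin n × Bool)) (({(x,true),(y,true)} : Finset (Fin n × Bool)) ::ₘ ({(x,true),(y,false)} : Finset (Fin n × Bool)) ::ₘ ({(x,false),(z,true)} : Finset (Fin n × Bool)) ::ₘ {({(x,false),(z,false)} : Finset (Fin n × Bool))}) = 1 := by
        simp [Multiset.count_cons, Multiset.count_singleton, Ne.symm hne12, hne23, hne24]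
      omega
    by_cases ha3 : a = ({(x,false),(z,true)} : Finset (Fin n × Bool))
    · subst ha3
      have hcnt : Multiset.count ({(x,false),(z,true)} : Finset (Fin n × Bool)) (({(x,true),(y,true)} : Finset (Fin n × Bool)) ::ₘ ({(x,true),(y,false)} : Finset (Fin n × Bool)) ::ₘ ({(x,false),(z,true)} : Finset (Fin n × Bool)) ::ₘ {({(x,false),(z,false)} : Finset (Fin n × Bool))}) = 1 := by
        simp [Multiset.count_cons, Multiset.count_singleton, Ne.symm hne13, Ne.symm hne23, hne34]
      omega
    by_cases ha4 : a = ({(x,false),(z,false)} : Finset (Fin n × Bool))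
    · subst ha4
      have hcnt : Multiset.count ({(x,false),(z,false)} : Finset (Fin n × Bool)) (({(x,true),(y,true)} : Finset (Fin n × Bool)) ::ₘ ({(x,true),(y,false)} : Finset (Fin n × Bool)) ::ₘ ({(x,false),(z,true)} : Finset (Fin n × Bool)) ::ₘ {({(x,false),(z,false)} : Finset (Fin n × Bool))}) = 1 := by
        simp [Multiset.count_cons, Multiset.count_singleton, Ne.symm hne14, Ne.symm hne24, Ne.symm hne34]
      omega
    · have hcnt : Multiset.count a (({(x,true),(y,true)} : Finset (Fin n × Bool)) ::ₘ ({(x,true),(y,false)} : Finset (Fin n × Bool)) ::ₘ ({(x,false),(z,true)} : Finset (Fin n × Bool)) ::ₘ {({(x,false),(z,false)} : Finset (Fin n × Bool))}) = 0 := by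
        simp [Multiset.count_cons, Multiset.count_singleton, ha1, ha2, ha3, ha4]
      omega
  · rfl
  · simp [Multiset.nodup_cons, Multiset.mem_cons, Multiset.mem_singleton,
      hne12, hne13, hne14, hne23, hne24, hne34]
  · intro C hC D hD hne
    simp only [Multiset.mem_cons, Multiset.mem_singleton] at hC hD
    rcases hC with rfl | rfl | rfl | rfl <;> rcases hD with rfl | rfl | rfl | rfl <;>
      first
        | exact absurd rfl hne
        | (refine ⟨(x,true), ?_, ?_⟩ <;> simp <;> done)
        | (refine ⟨(x,false), ?_, ?_⟩ <;> simp <;> done)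
        | (refine ⟨(y,true), ?_, ?_⟩ <;> simp <;> done)
        | (refine ⟨(y,false), ?_, ?_⟩ <;> simp <;> done)
        | (refine ⟨(z,true), ?_, ?_⟩ <;> simp <;> done)
        | (refine ⟨(z,false), ?_, ?_⟩ <;> simp <;> done)

lemma sig_alt (F : Multiset (Finset (Fin n × Bool)))
    (hF : ∀ C ∈ F, ProperClause2 C) (hS : ¬ ∃ G ≤ F, Semicomplete2 G) (x : Fin n)
    (hx : ¬ Insignificant F x) (hno : ∀ y, eE F x y = 0) : cE F x ≠ 0 := by
  unfold Insignificant at hx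
  push_neg at hx
  obtain ⟨j, b, hjx, hcnt⟩ := hx
  have key : ∀ y : Fin n, y ≠ x → ∀ tb : Bool,
      4 * ((F.count {(x,true),(y,tb)} : ℤ) - (F.count {(x,false),(y,tb)} : ℤ))
        = 2 * pE F x y := by
    intro y hyx tb
    have hxy : x ≠ y := Ne.symm hyx
    have h1 := count_formula F hF hxy true tb
    have h2 := count_formula F hF hxy false tb
    have he : (F.map fun C => lit C x * lit C y).sum = 0 := by
      have h0 := hno y
      unfold eE at h0
      rwa [if_neg hxy] at h0
    rw [he] at h1 h2
    cases tb <;> simp [sg] at h1 h2 <;> linarith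
  have hpj : pE F x j ≠ 0 := by
    intro h0
    have hk := key j hjx b
    rw [h0] at hk
    have : (F.count {(x,true),(j,b)} : ℤ) = (F.count {(x,false),(j,b)} : ℤ) := by linarith
    exact hcnt (by exact_mod_cast this)
  have hposneg : ∀ y : Fin n, y ≠ x → 0 < pE F x y →
      ∀ z : Fin n, z ≠ x → pE F x z < 0 → False := by
    intro y hyx hy z hzx hz
    have hy1 := key y hyx true
    have hy0 := key y hyx false
    have hz1 := key z hzx true
    have hz0 := key z hzx false
    apply hS
    apply semicomplete_of_counts hyx hzx
    · have hb : (0:ℤ) ≤ (F.count {(x,false),(y,true)} : ℤ) := Int.natCast_nonneg _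
      have : (0:ℤ) < (F.count {(x,true),(y,true)} : ℤ) := by linarith
      exact_mod_cast this
    · have hb : (0:ℤ) ≤ (F.count {(x,false),(y,false)} : ℤ) := Int.natCast_nonneg _
      have : (0:ℤ) < (F.count {(x,true),(y,false)} : ℤ) := by linarith
      exact_mod_cast this
    · have hb : (0:ℤ) ≤ (F.count {(x,true),(z,true)} : ℤ) := Int.natCast_nonneg _
      have : (0:ℤ) < (F.count {(x,false),(z,true)} : ℤ) := by linarith
      exact_mod_cast this
    · have hb : (0:ℤ) ≤ (F.count {(x,true),(z,false)} : ℤ) := Int.natCast_nonneg _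
      have : (0:ℤ) < (F.count {(x,false),(z,false)} : ℤ) := by linarith
      exact_mod_cast this
  rw [cE_eq_sum_pE F hF x]
  by_cases hpos : ∀ y : Fin n, y ≠ x → 0 ≤ pE F x y
  · have hjmem : j ∈ Finset.univ.erase x := Finset.mem_erase.mpr ⟨hjx, Finset.mem_univ j⟩
    have hposs : 0 < ∑ y ∈ Finset.univ.erase x, pE F x y :=
      Finset.sum_pos' (fun y hy => hpos y (Finset.mem_erase.mp hy).1)
        ⟨j, hjmem, lt_of_le_of_ne (hpos j hjx) (Ne.symm hpj)⟩
    exact ne_of_gt hposs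
  · push_neg at hpos
    obtain ⟨z, hzx, hzneg⟩ := hpos
    have hall : ∀ y : Fin n, y ≠ x → pE F x y ≤ 0 := by
      intro y hyx
      by_contra hpy
      push_neg at hpy
      exact hposneg y hyx hpy z hzx hzneg
    have hjmem : j ∈ Finset.univ.erase x := Finset.mem_erase.mpr ⟨hjx, Finset.mem_univ j⟩
    have hnegs : 0 < ∑ y ∈ Finset.univ.erase x, (- pE F x y) :=
      Finset.sum_pos' (fun y hy => by
          have := hall y (Finset.mem_erase.mp hy).1; linarith)
        ⟨j, hjmem, by
          have h1 := hall j hjx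
          have : pE F x j < 0 := lt_of_le_of_ne h1 hpj
          linarith⟩
    rw [Finset.sum_neg_distrib] at hnegs
    intro h0
    rw [h0] at hnegs
    exact lt_irrefl 0 (by linarith)

end Stmt15

open Stmt15 in
/-- Let `F` be a 2-CNF formula with `m` clauses containing no semicomplete subset
(`F = F^S`), and let `k ≥ 0` be an integer.  If `F` has more than `3k − 2` significant
variables, then `sat(F) ≥ (3m + k)/4`. -/
theorem stmt_15 (n : ℕ) (F : Multiset (Finset (Fin n × Bool)))
    (hF : ∀ C ∈ F, ProperClause2 C)
    (hS : ¬ ∃ G ≤ F, Semicomplete2 G)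
    (k : ℕ)
    (hsig : (3 : ℤ) * k - 2 <
      ((Finset.univ.filter fun x : Fin n => ¬ Insignificant F x).card : ℤ)) :
    ((3 * F.card : ℝ) + k) / 4 ≤ (maxSat F : ℝ) := by
  unfold maxSat
  obtain ⟨ξ0, hξ0pm, hξ0all⟩ := quad_bound (eE F) (eE_symm F) (eE_diag F)
    Finset.univ.card Finset.univ le_rfl
  set B := Finset.univ.filter (fun x : Fin n => ∃ y, eE F x y ≠ 0) with hBdef
  have hξ0 : 2 * (B.card : ℤ)
      ≤ -3 * ∑ x, ∑ y, eE F x y * (ξ0 x * ξ0 y) := by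
    refine hξ0all B ?_
    intro x hx
    obtain ⟨y, hy⟩ := (Finset.mem_filter.mp hx).2
    exact ⟨Finset.mem_univ x, y, Finset.mem_univ y, hy⟩
  set A := Finset.univ.filter
    (fun x : Fin n => ¬ Insignificant F x ∧ ∀ y, eE F x y = 0) with hAdef
  have hAe : ∀ x ∈ A, ∀ y, eE F x y = 0 := fun x hx => (Finset.mem_filter.mp hx).2.2
  have hAc : ∀ x ∈ A, cE F x ≠ 0 := by
    intro x hx
    obtain ⟨-, hsg, hno⟩ := Finset.mem_filter.mp hx
    exact sig_alt F hF hS x hsg hno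
  have hcover : (Finset.univ.filter fun x : Fin n => ¬ Insignificant F x) ⊆ A ∪ B := by
    intro x hx
    have hsx := (Finset.mem_filter.mp hx).2
    by_cases h : ∀ y, eE F x y = 0
    · exact Finset.mem_union_left _ (Finset.mem_filter.mpr ⟨Finset.mem_univ x, hsx, h⟩)
    · push_neg at h
      obtain ⟨y, hy⟩ := h
      exact Finset.mem_union_right _
        (Finset.mem_filter.mpr ⟨Finset.mem_univ x, y, hy⟩)
  have hcardS : ((Finset.univ.filter fun x : Fin n => ¬ Insignificant F x).card : ℤ)
      ≤ (A.card : ℤ) + B.card := by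
    have h1 := Finset.card_le_card hcover
    have h2 := Finset.card_union_le A B
    exact_mod_cast le_trans h1 h2
  set r := ∑ x ∈ Finset.univ.filter (fun x => x ∉ A), cE F x * ξ0 x with hrdef
  set ε : ℤ := if 0 ≤ r then 1 else -1 with hεdef
  have hεpm : ε = 1 ∨ ε = -1 := by rw [hεdef]; split <;> simp
  have hεr : 0 ≤ ε * r := by
    rw [hεdef]; split_ifs with h
    · simpa using h
    · have hr0 : r < 0 := lt_of_not_ge h
      nlinarith
  have hε2 : ε * ε = 1 := by rcases hεpm with h | h <;> simp [h]
  set ξ1 : Fin n → ℤ := fun x => if x ∈ A then (if 0 ≤ cE F x then 1 else -1)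
    else ε * ξ0 x with hξ1def
  have hξ1pm : ∀ x, ξ1 x = 1 ∨ ξ1 x = -1 := by
    intro x; rw [hξ1def]; dsimp only; split_ifs
    · exact Or.inl rfl
    · exact Or.inr rfl
    · exact pm_mul hεpm (hξ0pm x)
  have hSeq : ∑ x, ∑ y, eE F x y * (ξ1 x * ξ1 y)
      = ∑ x, ∑ y, eE F x y * (ξ0 x * ξ0 y) := by
    refine Finset.sum_congr rfl fun x _ => Finset.sum_congr rfl fun y _ => ?_
    by_cases hexy : eE F x y = 0
    · rw [hexy]; ring
    · have hxA : x ∉ A := fun hxA => hexy (hAe x hxA y)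
      have hyA : y ∉ A := fun hyA => hexy (by rw [eE_symm]; exact hAe y hyA x)
      have h1 : ξ1 x = ε * ξ0 x := by rw [hξ1def]; simp [hxA]
      have h2 : ξ1 y = ε * ξ0 y := by rw [hξ1def]; simp [hyA]
      rw [h1, h2, show ε * ξ0 x * (ε * ξ0 y) = (ε * ε) * (ξ0 x * ξ0 y) from by ring,
        hε2, one_mul]
  have hLin : (A.card : ℤ) ≤ ∑ x, cE F x * ξ1 x := by
    have hfil : Finset.univ.filter (fun x : Fin n => x ∈ A) = A := by
      rw [Finset.filter_mem_eq_inter, Finset.univ_inter]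
    have hsplit : ∑ x, cE F x * ξ1 x
        = ∑ x ∈ A, cE F x * ξ1 x
          + ∑ x ∈ Finset.univ.filter (fun x => x ∉ A), cE F x * ξ1 x := by
      rw [← Finset.sum_filter_add_sum_filter_not Finset.univ (fun x => x ∈ A), hfil]
    have hA1 : ∀ x ∈ A, cE F x * ξ1 x = |cE F x| := by
      intro x hx
      have : ξ1 x = (if 0 ≤ cE F x then 1 else -1) := by rw [hξ1def]; simp [hx]
      rw [this]
      split_ifs with h
      · rw [abs_of_nonneg h]; ring
      · rw [abs_of_neg (lt_of_not_ge h)]; ring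
    have hA2 : (A.card : ℤ) ≤ ∑ x ∈ A, cE F x * ξ1 x := by
      rw [Finset.sum_congr rfl hA1]
      calc (A.card : ℤ) = ∑ _x ∈ A, (1:ℤ) := by
            rw [Finset.sum_const, nsmul_eq_mul, mul_one]
        _ ≤ ∑ x ∈ A, |cE F x| :=
            Finset.sum_le_sum fun x hx => Int.one_le_abs (hAc x hx)
    have hA3 : ∑ x ∈ Finset.univ.filter (fun x => x ∉ A), cE F x * ξ1 x = ε * r := by
      rw [hrdef, Finset.mul_sum]
      refine Finset.sum_congr rfl fun x hx => ?_
      have hxA : x ∉ A := (Finset.mem_filter.mp hx).2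
      have : ξ1 x = ε * ξ0 x := by rw [hξ1def]; simp [hxA]
      rw [this]; ring
    rw [hsplit, hA3]
    linarith
  set τ : Fin n → Bool := fun x => if ξ1 x = 1 then true else false with hτdef
  have hxi : ∀ x, xi τ x = ξ1 x := by
    intro x
    rcases hξ1pm x with h | h
    · have ht : τ x = true := by rw [hτdef]; simp [h]
      simp [xi, sg, ht, h]
    · have ht : τ x = false := by rw [hτdef]; norm_num [h]
      simp [xi, sg, ht, h]
  have hid := identity F hF τ
  have hid1 : ∑ x, cE F x * xi τ x = ∑ x, cE F x * ξ1 x :=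
    Finset.sum_congr rfl fun x _ => by rw [hxi x]
  have hid2 : ∑ x, ∑ y, eE F x y * (xi τ x * xi τ y)
      = ∑ x, ∑ y, eE F x y * (ξ1 x * ξ1 y) :=
    Finset.sum_congr rfl fun x _ => Finset.sum_congr rfl fun y _ => by rw [hxi x, hxi y]
  rw [hid1, hid2, hSeq] at hid
  have hsig2 : 3 * (k:ℤ) - 2 + 1
      ≤ ((Finset.univ.filter fun x : Fin n => ¬ Insignificant F x).card : ℤ) :=
    Int.add_one_le_iff.mpr hsig
  have hA0 : (0:ℤ) ≤ (A.card : ℤ) := Int.natCast_nonneg _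
  have hfinal : 6 * (k:ℤ) - 2 ≤ 24 * (F.countP (Sat τ) : ℤ) - 18 * (F.card : ℤ) := by
    linarith [hξ0, hLin, hid, hsig2, hcardS, hA0]
  have hNge : 3 * (F.card : ℤ) + (k:ℤ) ≤ 4 * (F.countP (Sat τ) : ℤ) := by omega
  have hmax : F.countP (Sat τ) ≤ Finset.univ.sup fun σ : Fin n → Bool => F.countP (Sat σ) :=
    Finset.le_sup (f := fun σ : Fin n → Bool => F.countP (Sat σ)) (Finset.mem_univ τ)
  rw [div_le_iff₀ (by norm_num : (0:ℝ) < 4)]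
  have hfin2 : 3 * (F.card : ℤ) + (k:ℤ)
      ≤ 4 * (((Finset.univ.sup fun σ : Fin n → Bool => F.countP (Sat σ) : ℕ)) : ℤ) := by
    refine le_trans hNge ?_
    have : (F.countP (Sat τ) : ℤ) ≤ (((Finset.univ.sup fun σ : Fin n → Bool => F.countP (Sat σ) : ℕ)) : ℤ) := by
      exact_mod_cast hmax
    linarith
  calc (3 * (F.card:ℝ) + k) = ((3 * (F.card:ℤ) + k : ℤ) : ℝ) := by push_cast; ring
    _ ≤ (((4 * ((Finset.univ.sup fun σ : Fin n → Bool => F.countP (Sat σ) : ℕ) : ℤ)) : ℤ) : ℝ) := by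
        exact_mod_cast hfin2
    _ = ((Finset.univ.sup fun σ : Fin n → Bool => F.countP (Sat σ) : ℕ) : ℝ) * 4 := by
        push_cast; ring
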